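/- Let T and z be jointly distributed random variables taking values in finite nonempty sets, and define the Bayes error rate Pe := 1 − E_z[max_t P(T = t | z)] (the lowest achievable error of any classifier predicting T from z). Then −ln(1 − Pe) ≤ H(T|z); equivalently, Pe ≤ 1 − exp(−H(T|z)). -/

import Mathlib

open scoped BigOperators

/-- Probability that the random variable `X` (on a finite sample space `Ω`
with probability mass function `p`) takes the value `x`. -/
noncomputable def pr {Ω S : Type*} [Fintype Ω] [DecidableEq S]
    (p : Ω → ℝ) (X : Ω → S) (x : S) : ℝ :=
  ∑ ω, if X ω = x then p ω else 0

/-- Shannon entropy (natural logarithm) of a random variable `X`. -/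
noncomputable def entropy {Ω S : Type*} [Fintype Ω] [Fintype S] [DecidableEq S]
    (p : Ω → ℝ) (X : Ω → S) : ℝ :=
  -∑ x, pr p X x * Real.log (pr p X x)

/-- Conditional Shannon entropy `H(X | Y)`. -/
noncomputable def condEntropy {Ω S U : Type*} [Fintype Ω] [Fintype S] [DecidableEq S]
    [Fintype U] [DecidableEq U] (p : Ω → ℝ) (X : Ω → S) (Y : Ω → U) : ℝ :=
  entropy p (fun ω => (X ω, Y ω)) - entropy p Y

/-- Mutual information `I(X; Y)`. -/
noncomputable def mi {Ω S U : Type*} [Fintype Ω] [Fintype S] [DecidableEq S]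
    [Fintype U] [DecidableEq U] (p : Ω → ℝ) (X : Ω → S) (Y : Ω → U) : ℝ :=
  entropy p X + entropy p Y - entropy p (fun ω => (X ω, Y ω))

/-- Conditional mutual information `I(X; Y | Z)`. -/
noncomputable def cmi {Ω S U W : Type*} [Fintype Ω] [Fintype S] [DecidableEq S]
    [Fintype U] [DecidableEq U] [Fintype W] [DecidableEq W]
    (p : Ω → ℝ) (X : Ω → S) (Y : Ω → U) (Z : Ω → W) : ℝ :=
  mi p X (fun ω => (Y ω, Z ω)) - mi p X Z

/-- Conditional probability `P(X = x | Y = y)` (with junk value `0` when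
`P(Y = y) = 0`, via real division). -/
noncomputable def condProb {Ω S U : Type*} [Fintype Ω] [DecidableEq S] [DecidableEq U]
    (p : Ω → ℝ) (X : Ω → S) (Y : Ω → U) (x : S) (y : U) : ℝ :=
  pr p (fun ω => (X ω, Y ω)) (x, y) / pr p Y y

/-- Bayes error rate `Pe = 1 − E_{p(z)}[max_t P(T = t | z)]`, the lowest
achievable error of any classifier predicting `T` from `Z`. -/
noncomputable def bayesError {Ω A B : Type*} [Fintype Ω]
    [Fintype A] [DecidableEq A] [Nonempty A] [Fintype B] [DecidableEq B]
    (p : Ω → ℝ) (T : Ω → A) (Z : Ω → B) : ℝ :=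
  1 - ∑ z, pr p Z z * ⨆ t, condProb p T Z t z

/-!
Write `q z = P(Z = z)`, `r t z = P(T = t, Z = z)` and `m z = max_t P(T = t | Z = z)`. For each `z`
the Shannon entropy of `T` given `Z = z` dominates its min-entropy `-log (m z)`, which after
averaging over `z` gives `-H(T | Z) ≤ ∑ z, q z * log (m z)`. Convexity of `exp` (weighted AM–GM)
then yields `exp (-H(T | Z)) ≤ ∑ z, q z * m z = 1 - Pe`, and both inequalities follow.
-/

open Real

lemma mul_log_sub_mul_log_le_mul_log {x q m : ℝ} (hx : 0 ≤ x) (hq : 0 < q) (hxm : x / q ≤ m) :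
    x * log x - x * log q ≤ x * log m := by
  rcases hx.eq_or_lt with rfl | hx
  · simp
  rw [← mul_sub, ← log_div hx.ne' hq.ne']
  exact mul_le_mul_of_nonneg_left (log_le_log (div_pos hx hq) hxm) hx.le

/-- Min-entropy is at most Shannon entropy, for the unnormalised weights `r`. -/
lemma sum_mul_log_sub_le_mul_log_iSup_div {A : Type*} [Fintype A] (r : A → ℝ)
    (hr : ∀ t, 0 ≤ r t) :
    ∑ t, r t * log (r t) - (∑ t, r t) * log (∑ t, r t)
      ≤ (∑ t, r t) * log (⨆ t, r t / ∑ t, r t) := by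
  rcases (Finset.sum_nonneg fun t _ => hr t).eq_or_lt with hq | hq
  · have hr0 : ∀ t, r t = 0 := fun t =>
      (Finset.sum_eq_zero_iff_of_nonneg fun t _ => hr t).1 hq.symm t (Finset.mem_univ t)
    simp [hr0]
  have hbdd : BddAbove (Set.range fun t => r t / ∑ t, r t) := (Set.finite_range _).bddAbove
  rw [Finset.sum_mul, Finset.sum_mul, ← Finset.sum_sub_distrib]
  exact Finset.sum_le_sum fun t _ =>
    mul_log_sub_mul_log_le_mul_log (hr t) hq (le_ciSup hbdd t)

lemma iSup_div_sum_pos {A : Type*} [Fintype A] (r : A → ℝ) (hq : 0 < ∑ t, r t) :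
    0 < ⨆ t, r t / ∑ t, r t := by
  obtain ⟨t, -, ht⟩ :=
    Finset.exists_lt_of_sum_lt (by simpa using hq : ∑ _t : A, (0 : ℝ) < ∑ t, r t)
  have hbdd : BddAbove (Set.range fun t => r t / ∑ t, r t) := (Set.finite_range _).bddAbove
  exact (div_pos ht hq).trans_le (le_ciSup hbdd t)

lemma exp_sum_mul_log_le_sum_mul {B : Type*} [Fintype B] (w m : B → ℝ)
    (hw : ∀ z, 0 ≤ w z) (hw1 : ∑ z, w z = 1) (hm : ∀ z, 0 < w z → 0 < m z) :
    exp (∑ z, w z * log (m z)) ≤ ∑ z, w z * m z := by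
  calc exp (∑ z, w z * log (m z))
      ≤ ∑ z, w z * exp (log (m z)) :=
        convexOn_exp.map_sum_le (fun z _ => hw z) hw1 fun z _ => Set.mem_univ _
    _ = ∑ z, w z * m z := by
        refine Finset.sum_congr rfl fun z _ => ?_
        rcases (hw z).eq_or_lt with hz | hz
        · simp [← hz]
        · rw [exp_log (hm z hz)]

section pr

variable {Ω : Type*} [Fintype Ω] (p : Ω → ℝ)

lemma pr_nonneg {S : Type*} [DecidableEq S] (hp : ∀ ω, 0 ≤ p ω) (X : Ω → S) (x : S) :
    0 ≤ pr p X x :=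
  Finset.sum_nonneg fun ω _ => by split_ifs <;> simp [hp ω]

lemma sum_pr {S : Type*} [Fintype S] [DecidableEq S] (X : Ω → S) :
    ∑ x, pr p X x = ∑ ω, p ω := by
  unfold pr
  rw [Finset.sum_comm]
  simp

variable {A B : Type*} [Fintype A] [DecidableEq A] [DecidableEq B]

lemma sum_pr_pair (T : Ω → A) (Z : Ω → B) (z : B) :
    ∑ t, pr p (fun ω => (T ω, Z ω)) (t, z) = pr p Z z := by
  unfold pr
  rw [Finset.sum_comm]
  refine Finset.sum_congr rfl fun ω _ => ?_
  by_cases h : Z ω = z <;> simp [Prod.ext_iff, h]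

lemma iSup_condProb_pos (T : Ω → A) (Z : Ω → B) {z : B}
    (hz : 0 < pr p Z z) : 0 < ⨆ t, condProb p T Z t z := by
  have := iSup_div_sum_pos (fun t => pr p (fun ω => (T ω, Z ω)) (t, z))
    (by rwa [sum_pr_pair])
  simp only [sum_pr_pair] at this
  exact this

variable [Fintype B]

lemma condEntropy_eq_sum (T : Ω → A) (Z : Ω → B) :
    condEntropy p T Z = ∑ z, (pr p Z z * log (pr p Z z)
      - ∑ t, pr p (fun ω => (T ω, Z ω)) (t, z) * log (pr p (fun ω => (T ω, Z ω)) (t, z))) := by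
  unfold condEntropy entropy
  rw [Fintype.sum_prod_type, Finset.sum_comm, Finset.sum_sub_distrib]
  ring

lemma neg_condEntropy_le (hp : ∀ ω, 0 ≤ p ω) (T : Ω → A) (Z : Ω → B) :
    -condEntropy p T Z ≤ ∑ z, pr p Z z * log (⨆ t, condProb p T Z t z) := by
  rw [condEntropy_eq_sum, ← Finset.sum_neg_distrib]
  refine Finset.sum_le_sum fun z _ => ?_
  have := sum_mul_log_sub_le_mul_log_iSup_div (fun t => pr p (fun ω => (T ω, Z ω)) (t, z))
    fun t => pr_nonneg p hp _ _
  simp only [sum_pr_pair] at this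
  unfold condProb
  linarith

end pr

theorem bayes_error_le_general
    {Ω A B : Type*} [Fintype Ω]
    [Fintype A] [DecidableEq A] [Nonempty A]
    [Fintype B] [DecidableEq B]
    (p : Ω → ℝ) (hp : ∀ ω, 0 ≤ p ω) (hp1 : ∑ ω, p ω = 1)
    (T : Ω → A) (Z : Ω → B) :
    -Real.log (1 - bayesError p T Z) ≤ condEntropy p T Z ∧
    bayesError p T Z ≤ 1 - Real.exp (-(condEntropy p T Z)) := by
  have key : exp (-condEntropy p T Z) ≤ 1 - bayesError p T Z :=
    calc exp (-condEntropy p T Z)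
        ≤ exp (∑ z, pr p Z z * log (⨆ t, condProb p T Z t z)) :=
          exp_le_exp.2 (neg_condEntropy_le p hp T Z)
      _ ≤ ∑ z, pr p Z z * ⨆ t, condProb p T Z t z :=
          exp_sum_mul_log_le_sum_mul _ _ (pr_nonneg p hp Z) (by rw [sum_pr, hp1])
            fun _ hz => iSup_condProb_pos p T Z hz
      _ = 1 - bayesError p T Z := by rw [bayesError, sub_sub_cancel]
  have hpos : 0 < 1 - bayesError p T Z := (exp_pos _).trans_le key
  exact ⟨neg_le.1 ((le_log_iff_exp_le hpos).2 key), by linarith⟩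

/-- **Fano-type bound on the Bayes error rate.** For finite random variables
`T` and `z`, the Bayes error rate `Pe = 1 − E_z[max_t P(T = t | z)]` satisfies
`−ln(1 − Pe) ≤ H(T | z)`, equivalently `Pe ≤ 1 − exp(−H(T | z))`. -/
theorem bayes_error_le
    {Ω A B : Type*} [Fintype Ω]
    [Fintype A] [DecidableEq A] [Nonempty A]
    [Fintype B] [DecidableEq B] [Nonempty B]
    (p : Ω → ℝ) (hp : ∀ ω, 0 ≤ p ω) (hp1 : ∑ ω, p ω = 1)
    (T : Ω → A) (Z : Ω → B) :
    -Real.log (1 - bayesError p T Z) ≤ condEntropy p T Z ∧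
    bayesError p T Z ≤ 1 - Real.exp (-(condEntropy p T Z)) :=
  bayes_error_le_general p hp hp1 T Z
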